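/- With notation as above, for n ≥ i+1 the element α = e_{2,1}^1 ∧ (e_{3,1}^1 + e_{3,2}^2) ∧ ⋯ ∧ (Σ_{j=1}^i e_{i+1,j}^j) ∈ Λ^i U satisfies c_i(ι_i(α)) = (−1)^i (i+1)!· (e_1 ∧ e_2 ∧ ⋯ ∧ e_{i+1}) ⊗ e_1* in (Λ^{i+1}H) ⊗ H*. -/

import Mathlib

/-!
STATEMENT 6.  Same setting as Statement 5: `H = ℚⁿ`, `U = Λ²H ⊗ H*` with basis
`e_{a,b}^c`, coordinates of `H ⊗ H ⊗ H*` modelled as `(Fin n × Fin n × Fin n) → ℚ`,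
antisymmetrization inclusion `ι_i : Λ^i U → (H^{⊗2} ⊗ H*)^{⊗i}`.  The tree
contraction `c_i : (H^{⊗2} ⊗ H*)^{⊗i} → (Λ^{i+1}H) ⊗ H*` sends
`⊗_j (a_j ⊗ b_j ⊗ d_j*)` to `(∏_{j=2}^i d_j*(b_{j-1})) · (a_1 ∧ ⋯ ∧ a_i ∧ b_i) ⊗ d_1*`.
Claim: for `n ≥ i + 1`, the element `α = e_{2,1}^1 ∧ (e_{3,1}^1 + e_{3,2}^2) ∧ ⋯ ∧
(Σ_{j=1}^i e_{i+1,j}^j)` satisfies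
`c_i(ι_i α) = (−1)^i (i+1)! · (e_1 ∧ ⋯ ∧ e_{i+1}) ⊗ e_1*`  (0-based: `e_1 = Pi.single 0 1`).
-/

open scoped TensorProduct

abbrev MT (n : ℕ) : Type := (Fin n × Fin n × Fin n) → ℚ

def eU {n : ℕ} (a b c : Fin n) : MT n := fun x =>
  (if x = (a, b, c) then 1 else 0) - (if x = (b, a, c) then 1 else 0)

def iot (n i : ℕ) (u : Fin i → MT n) : (Fin i → Fin n × Fin n × Fin n) → ℚ :=
  fun K => ∑ σ : Equiv.Perm (Fin i),
    ((Equiv.Perm.sign σ : ℤ) : ℚ) * ∏ j : Fin i, u (σ j) (K j)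

def bv {n : ℕ} (a : Fin n) : Fin n → ℚ := Pi.single a 1

/-- `e_{v 0} ∧ ⋯ ∧ e_{v (i-1)} ∧ e_w` in the exterior algebra of `ℚⁿ`. -/
noncomputable def wedgeb (n i : ℕ) (v : Fin i → Fin n) (w : Fin n) :
    ExteriorAlgebra ℚ (Fin n → ℚ) :=
  (((List.finRange i).map fun j => ExteriorAlgebra.ι ℚ (bv (v j))) ++
    [ExteriorAlgebra.ι ℚ (bv w)]).prod

/-- The tree contraction `c_i : (H^{⊗2} ⊗ H*)^{⊗i} → (Λ^{i+1}H) ⊗ H*` in coordinates: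
`⊗_j (a_j ⊗ b_j ⊗ d_j*) ↦ (∏_{j=2}^i d_j*(b_{j-1})) (a_1 ∧ ⋯ ∧ a_i ∧ b_i) ⊗ d_1*`. -/
noncomputable def ctree (n i : ℕ) (hi : 0 < i) (T : (Fin i → Fin n × Fin n × Fin n) → ℚ) :
    ExteriorAlgebra ℚ (Fin n → ℚ) ⊗[ℚ] (Fin n → ℚ) :=
  ∑ K : Fin i → Fin n × Fin n × Fin n,
    (T K * ∏ j : Fin i,
        (if hj : (j : ℕ) = 0 then (1:ℚ)
         else if (K j).2.2 = (K (⟨(j : ℕ) - 1, by omega⟩ : Fin i)).2.1 then 1 else 0)) •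
      (wedgeb n i (fun j => (K j).1) ((K (⟨i - 1, by omega⟩ : Fin i)).2.1) ⊗ₜ[ℚ]
        bv ((K (⟨0, hi⟩ : Fin i)).2.2))

namespace S6
open Equiv Finset
variable {m : ℕ}

variable {m : ℕ}

noncomputable def minv (τ : Equiv.Perm (Fin (m+1))) (p : Fin (m+1)) : Fin (m+1) :=
  τ.symm (((Finset.Icc p (Fin.last m)).image τ).min' (Finset.Nonempty.image
    ⟨p, Finset.mem_Icc.mpr ⟨le_refl _, Fin.le_last _⟩⟩ _))

lemma apply_minv (τ : Equiv.Perm (Fin (m+1))) (p : Fin (m+1)) :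
    τ (minv τ p) = ((Finset.Icc p (Fin.last m)).image τ).min' (Finset.Nonempty.image
      ⟨p, Finset.mem_Icc.mpr ⟨le_refl _, Fin.le_last _⟩⟩ _) := by
  simp [minv]

lemma le_minv (τ : Equiv.Perm (Fin (m+1))) (p : Fin (m+1)) : p ≤ minv τ p := by
  have h := Finset.min'_mem ((Finset.Icc p (Fin.last m)).image τ) (Finset.Nonempty.image
      ⟨p, Finset.mem_Icc.mpr ⟨le_refl _, Fin.le_last _⟩⟩ _)
  rw [Finset.mem_image] at h
  obtain ⟨q, hq, hq2⟩ := h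
  have : minv τ p = q := by
    apply τ.injective; rw [apply_minv, hq2]
  rw [this]
  exact (Finset.mem_Icc.mp hq).1

lemma apply_minv_le (τ : Equiv.Perm (Fin (m+1))) {p q : Fin (m+1)} (h : p ≤ q) :
    τ (minv τ p) ≤ τ q := by
  rw [apply_minv]
  exact Finset.min'_le _ _ (Finset.mem_image_of_mem _ (Finset.mem_Icc.mpr ⟨h, Fin.le_last _⟩))

lemma minv_eq (τ : Equiv.Perm (Fin (m+1))) {p q : Fin (m+1)} (h1 : p ≤ q)
    (h2 : ∀ r, p ≤ r → τ q ≤ τ r) : minv τ p = q := by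
  apply τ.injective
  exact le_antisymm (apply_minv_le τ h1) (h2 _ (le_minv τ p))

lemma minv_idem (τ : Equiv.Perm (Fin (m+1))) (p : Fin (m+1)) :
    minv τ (minv τ p) = minv τ p := by
  apply minv_eq τ (le_refl _)
  intro r hr
  exact apply_minv_le τ (le_trans (le_minv τ p) hr)

lemma minv_castSucc_of_ne (τ : Equiv.Perm (Fin (m+1))) (j : Fin m)
    (h : minv τ j.castSucc ≠ j.castSucc) : minv τ j.castSucc = minv τ j.succ := by
  have h2 : j.castSucc < minv τ j.castSucc := lt_of_le_of_ne (le_minv τ j.castSucc) (Ne.symm h)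
  have h1 : j.succ ≤ minv τ j.castSucc := Fin.castSucc_lt_iff_succ_le.mp h2
  refine (minv_eq τ h1 ?_).symm
  intro r hr
  exact apply_minv_le τ (le_trans (le_of_lt ((Fin.castSucc_lt_succ : j.castSucc < j.succ))) hr)

lemma minv_last (τ : Equiv.Perm (Fin (m+1))) : minv τ (Fin.last m) = Fin.last m :=
  minv_eq τ (le_refl _) (fun r hr => by rw [le_antisymm (Fin.le_last r) hr])

lemma apply_minv_zero (τ : Equiv.Perm (Fin (m+1))) : τ (minv τ 0) = 0 := by
  have := apply_minv_le τ (p := 0) (q := τ.symm 0) (Fin.zero_le _)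
  rw [Equiv.apply_symm_apply] at this
  exact le_antisymm this (Fin.zero_le _)

lemma minv_eq_self_iff (τ : Equiv.Perm (Fin (m+1))) (p : Fin (m+1)) :
    minv τ p = p ↔ ∀ r, p ≤ r → τ p ≤ τ r := by
  constructor
  · intro h r hr
    conv_lhs => rw [← h]
    exact apply_minv_le τ hr
  · intro h
    exact minv_eq τ (le_refl _) h

/-- the set of "future minima" positions -/
noncomputable def Sset (τ : Equiv.Perm (Fin (m+1))) : Finset (Fin m) :=
  Finset.univ.filter (fun j => minv τ j.castSucc = j.castSucc)

lemma image_swap_of_mem {α : Type*} [DecidableEq α] {s : Finset α} {a b : α}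
    (ha : a ∈ s) (hb : b ∈ s) : s.image (Equiv.swap a b) = s := by
  apply Finset.eq_of_subset_of_card_le
  · intro y hy
    rw [Finset.mem_image] at hy
    obtain ⟨x, hx, rfl⟩ := hy
    by_cases h1 : x = a
    · simpa [h1, Equiv.swap_apply_left] using hb
    by_cases h2 : x = b
    · simpa [h2, Equiv.swap_apply_right] using ha
    · rwa [Equiv.swap_apply_of_ne_of_ne h1 h2]
  · rw [Finset.card_image_of_injective _ (Equiv.injective _)]


end S6
namespace S6
open Equiv Finset
variable {m : ℕ}

lemma minv_zero_eq_last (τ : Equiv.Perm (Fin (m+1)))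
    (hS : ∀ j : Fin m, minv τ j.castSucc ≠ j.castSucc) : minv τ 0 = Fin.last m := by
  rcases Fin.eq_castSucc_or_eq_last (minv τ 0) with ⟨j, hj⟩ | h
  · exfalso
    apply hS j
    rw [← hj]
    rw [minv_idem τ 0, hj]
  · exact h

lemma sign_base (τ : Equiv.Perm (Fin (m+1))) (σ : Equiv.Perm (Fin m))
    (hS : ∀ j : Fin m, minv τ j.castSucc ≠ j.castSucc)
    (hyp : ∀ j : Fin m, (σ j : ℕ) + 1 = max ((τ j.castSucc : ℕ)) ((τ (minv τ j.succ) : ℕ))) :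
    (Equiv.Perm.sign τ : ℤ) = (-1)^m * (Equiv.Perm.sign σ : ℤ) := by
  have hlast : τ (Fin.last m) = 0 := by
    rw [← minv_zero_eq_last τ hS]; exact apply_minv_zero τ
  have hτc : ∀ j : Fin m, (τ j.castSucc : ℕ) = (σ j : ℕ) + 1 := by
    intro j
    have hne := hS j
    have hshift := minv_castSucc_of_ne τ j hne
    have hlt : τ (minv τ j.succ) < τ j.castSucc := by
      rw [← hshift]
      exact lt_of_le_of_ne (apply_minv_le τ (le_refl _))
        (fun heq => hne (τ.injective heq))
    rw [hyp j, max_eq_left (le_of_lt (Fin.lt_iff_val_lt_val.mp hlt))]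
  set sext : Equiv.Perm (Fin (m+1)) := (Equiv.permCongr finSuccEquivLast.symm) σ.optionCongr with hsext
  have heq : τ = finRotate (m+1) * sext := by
    apply Equiv.ext
    intro x
    cases x using Fin.lastCases with
    | last =>
      have h1 : sext (Fin.last m) = Fin.last m := by
        simp [hsext, Equiv.permCongr_apply]
      rw [Equiv.Perm.mul_apply, h1, hlast]
      simp [finRotate_succ_apply]
    | cast j =>
      have h1 : sext j.castSucc = (σ j).castSucc := by
        simp [hsext, Equiv.permCongr_apply]
      rw [Equiv.Perm.mul_apply, h1]
      apply Fin.ext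
      rw [hτc j]
      rw [finRotate_succ_apply, Fin.coeSucc_eq_succ]
      simp
  rw [heq]
  rw [map_mul]
  have h2 : Equiv.Perm.sign sext = Equiv.Perm.sign σ := by
    rw [hsext, Equiv.Perm.sign_permCongr, Equiv.optionCongr_sign]
  rw [h2, sign_finRotate]
  push_cast
  ring

lemma signlemma (c : ℕ) (τ : Equiv.Perm (Fin (m+1))) (σ : Equiv.Perm (Fin m))
    (hc : (Sset τ).card = c)
    (hyp : ∀ j : Fin m, (σ j : ℕ) + 1 = max ((τ j.castSucc : ℕ)) ((τ (minv τ j.succ) : ℕ))) :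
    (Equiv.Perm.sign σ : ℤ) * (-1)^c = (-1)^m * (Equiv.Perm.sign τ : ℤ) := by
  induction c generalizing τ with
  | zero =>
    have hS : ∀ j : Fin m, minv τ j.castSucc ≠ j.castSucc := by
      intro j hj
      have : j ∈ Sset τ := by simp [Sset, hj]
      rw [Finset.card_eq_zero.mp hc] at this
      exact absurd this (Finset.notMem_empty j)
    rw [sign_base τ σ hS hyp, pow_zero, mul_one, ← mul_assoc, ← pow_add,
      Even.neg_one_pow ⟨m, rfl⟩, one_mul]
  | succ c ih =>
    -- Sset is nonempty
    have hne : (Sset τ).Nonempty := Finset.card_pos.mp (by omega)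
    set js : Fin m := (Sset τ).max' hne with hjs
    have hjsS : minv τ js.castSucc = js.castSucc := by
      have := (Sset τ).max'_mem hne
      rw [← hjs] at this
      simpa [Sset] using this
    have hgt : ∀ j ∈ Sset τ, j ≤ js := fun j hj => Finset.le_max' _ j hj
    have hnotS : ∀ j : Fin m, js < j → minv τ j.castSucc ≠ j.castSucc := by
      intro j hlt hj
      have : j ∈ Sset τ := by simp [Sset, hj]
      exact absurd (hgt j this) (not_le_of_gt hlt)
    have hcs_ne_last : js.castSucc ≠ Fin.last m := ne_of_lt (Fin.castSucc_lt_last js)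
    set τ' : Equiv.Perm (Fin (m+1)) := τ * Equiv.swap js.castSucc (Fin.last m) with hτ'
    have hτ'app : ∀ x, τ' x = τ (Equiv.swap js.castSucc (Fin.last m) x) := fun x => rfl
    have hτ'js : τ' js.castSucc = τ (Fin.last m) := by
      rw [hτ'app, Equiv.swap_apply_left]
    have hτ'last : τ' (Fin.last m) = τ js.castSucc := by
      rw [hτ'app, Equiv.swap_apply_right]
    have hτ'other : ∀ x, x ≠ js.castSucc → x ≠ Fin.last m → τ' x = τ x := by
      intro x h1 h2
      rw [hτ'app, Equiv.swap_apply_of_ne_of_ne h1 h2]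
    -- strict minimality of τ at js.castSucc over [js.castSucc, last]
    have hmin : ∀ r, js.castSucc ≤ r → τ js.castSucc ≤ τ r :=
      (minv_eq_self_iff τ js.castSucc).mp hjsS
    have hmins : ∀ r, js.castSucc ≤ r → r ≠ js.castSucc → τ js.castSucc < τ r := by
      intro r h1 h2
      exact lt_of_le_of_ne (hmin r h1) (fun he => h2 (τ.injective he).symm)
    -- swap maps [p,last] to itself for p ≤ js.castSucc
    have hswapmem : ∀ p r : Fin (m+1), p ≤ js.castSucc → p ≤ r →
        p ≤ Equiv.swap js.castSucc (Fin.last m) r := by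
      intro p r hp hr
      rcases Equiv.swap_apply_def js.castSucc (Fin.last m) r with _
      by_cases e1 : r = js.castSucc
      · rw [e1, Equiv.swap_apply_left]; exact le_trans hp (Fin.le_last _)
      by_cases e2 : r = Fin.last m
      · rw [e2, Equiv.swap_apply_right]; exact hp
      · rw [Equiv.swap_apply_of_ne_of_ne e1 e2]; exact hr
    -- (M3): for p ≥ js.castSucc, minv τ' p = last
    have hM3 : ∀ p : Fin (m+1), js.castSucc ≤ p → minv τ' p = Fin.last m := by
      intro p hp
      apply minv_eq τ' (Fin.le_last p)
      intro r hr
      rw [hτ'last, hτ'app]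
      exact hmin _ (hswapmem _ r (le_refl _) (le_trans hp hr))
    -- (M2): for p ≤ js.castSucc, the min values agree
    have hM2 : ∀ p : Fin (m+1), p ≤ js.castSucc → τ' (minv τ' p) = τ (minv τ p) := by
      intro p hp
      rw [apply_minv, apply_minv]
      congr 1
      have : (Finset.Icc p (Fin.last m)).image τ' =
          ((Finset.Icc p (Fin.last m)).image (Equiv.swap js.castSucc (Fin.last m))).image τ := by
        rw [Finset.image_image]; rfl
      rw [this, image_swap_of_mem (Finset.mem_Icc.mpr ⟨hp, Fin.le_last _⟩)
        (Finset.mem_Icc.mpr ⟨le_trans hp (Fin.le_last _), le_refl _⟩)]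
    -- (M4): Sset τ' = (Sset τ).erase js
    have hM4 : Sset τ' = (Sset τ).erase js := by
      ext j
      simp only [Sset, Finset.mem_erase, Finset.mem_filter, Finset.mem_univ, true_and]
      rcases lt_trichotomy j js with hlt | heq | hgt2
      · have hcs : j.castSucc ≤ js.castSucc := le_of_lt (Fin.castSucc_lt_castSucc_iff.mpr hlt)
        have hτ'j : τ' j.castSucc = τ j.castSucc :=
          hτ'other _ (fun he => (ne_of_lt hlt) (Fin.castSucc_injective _ he))
            (ne_of_lt (Fin.castSucc_lt_last j))
        constructor
        · intro h
          refine ⟨ne_of_lt hlt, ?_⟩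
          rw [minv_eq_self_iff] at h ⊢
          intro r hr
          have := h (Equiv.swap js.castSucc (Fin.last m) r) (hswapmem _ r hcs hr)
          rw [hτ'j, hτ'app, Equiv.swap_apply_self] at this
          exact this
        · rintro ⟨-, h⟩
          rw [minv_eq_self_iff] at h ⊢
          intro r hr
          rw [hτ'j, hτ'app]
          exact h _ (hswapmem _ r hcs hr)
      · subst heq
        constructor
        · intro h
          rw [hM3 _ (le_refl _)] at h
          exact absurd h.symm hcs_ne_last
        · rintro ⟨h, -⟩; exact absurd rfl h
      · constructor
        · intro h
          rw [hM3 _ (le_of_lt (Fin.castSucc_lt_castSucc_iff.mpr hgt2))] at h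
          exact absurd h.symm (ne_of_lt (Fin.castSucc_lt_last j))
        · rintro ⟨-, h⟩
          exact absurd (hgt j (by simp [Sset, h])) (not_le_of_gt hgt2)
    have hc' : (Sset τ').card = c := by
      rw [hM4, Finset.card_erase_of_mem ((Sset τ).max'_mem hne)]
      omega
    -- hypothesis transport
    have hyp' : ∀ j : Fin m, (σ j : ℕ) + 1 =
        max ((τ' j.castSucc : ℕ)) ((τ' (minv τ' j.succ) : ℕ)) := by
      intro j
      rcases lt_trichotomy j js with hlt | heq | hgt2
      · have hτ'j : τ' j.castSucc = τ j.castSucc :=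
          hτ'other _ (fun he => (ne_of_lt hlt) (Fin.castSucc_injective _ he))
            (ne_of_lt (Fin.castSucc_lt_last j))
        have hsucc : j.succ ≤ js.castSucc := by
          rw [Fin.succ_le_castSucc_iff]; exact hlt
        rw [hτ'j, hM2 _ hsucc, hyp j]
      · subst heq
        have hminvlast : minv τ js.succ = Fin.last m := by
          rcases Fin.eq_castSucc_or_eq_last (minv τ js.succ) with ⟨j', hj'⟩ | h
          · exfalso
            have hj'mem : minv τ j'.castSucc = j'.castSucc := by
              rw [← hj', minv_idem, hj']
            have hlt2 : js < j' := by
              have := le_minv τ js.succ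
              rw [hj'] at this
              exact Fin.succ_le_castSucc_iff.mp this
            exact hnotS j' hlt2 hj'mem
          · exact h
        have h1 : minv τ' js.succ = Fin.last m :=
          hM3 _ (le_of_lt ((Fin.castSucc_lt_succ : js.castSucc < js.succ)))
        rw [h1, hτ'last, hτ'js, hyp js, hminvlast]
        have := hmins (Fin.last m) (le_of_lt (Fin.castSucc_lt_last js)) (Ne.symm hcs_ne_last)
        have hv := Fin.lt_iff_val_lt_val.mp this
        omega
      · have hτ'j : τ' j.castSucc = τ j.castSucc :=
          hτ'other _ (fun he => (ne_of_gt hgt2) (Fin.castSucc_injective _ he))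
            (ne_of_lt (Fin.castSucc_lt_last j))
        have h1 : minv τ' j.succ = Fin.last m :=
          hM3 _ (le_trans (le_of_lt (Fin.castSucc_lt_castSucc_iff.mpr hgt2))
            (le_of_lt ((Fin.castSucc_lt_succ : j.castSucc < j.succ))))
        have h2 : minv τ j.castSucc = minv τ j.succ :=
          minv_castSucc_of_ne τ j (hnotS j hgt2)
        have h3 : τ (minv τ j.succ) < τ j.castSucc := by
          rw [← h2]
          exact lt_of_le_of_ne (apply_minv_le τ (le_refl _))
            (fun he => (hnotS j hgt2) (τ.injective he))
        have h4 : τ js.castSucc < τ j.castSucc :=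
          hmins _ (le_of_lt (Fin.castSucc_lt_castSucc_iff.mpr hgt2))
            (fun he => (ne_of_gt hgt2) (Fin.castSucc_injective _ he))
        rw [hτ'j, h1, hτ'last, hyp j]
        have hv3 := Fin.lt_iff_val_lt_val.mp h3
        have hv4 := Fin.lt_iff_val_lt_val.mp h4
        omega
    have ihp := ih τ' hc' hyp'
    have hsign : Equiv.Perm.sign τ' = - Equiv.Perm.sign τ := by
      rw [hτ', map_mul, Equiv.Perm.sign_swap hcs_ne_last, mul_neg_one]
    rw [hsign] at ihp
    push_cast at ihp ⊢
    linear_combination -ihp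
end S6
open Equiv Finset
namespace S6
variable {n i : ℕ}

lemma bv_inj : Function.Injective (bv (n := n)) := by
  intro a b h
  by_contra hne
  have h1 : bv a a = 1 := by simp [bv]
  have h2 : bv b a = 0 := by simp [bv, Pi.single_apply, Ne.symm hne]
  rw [h] at h1
  rw [h1] at h2
  norm_num at h2

lemma wedge_eq (v : Fin i → Fin n) (w : Fin n) :
    wedgeb n i v w = ExteriorAlgebra.ιMulti ℚ (i+1)
      (fun p => bv ((Fin.snoc v w : Fin (i+1) → Fin n) p)) := by
  rw [ExteriorAlgebra.ιMulti_apply, List.ofFn_succ']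
  simp only [Fin.snoc_castSucc, Fin.snoc_last]
  rw [List.concat_eq_append, wedgeb, List.ofFn_eq_map]

lemma alpha_plus (hn : i + 1 ≤ n) (α : Fin i → MT n)
    (hα : ∀ k : Fin i, α k = ∑ j : Fin ((k : ℕ) + 1),
      eU (⟨(k : ℕ) + 1, by have := k.isLt; linarith⟩ : Fin n)
         (⟨(j : ℕ), by have := j.isLt; have := k.isLt; linarith⟩ : Fin n)
         (⟨(j : ℕ), by have := j.isLt; have := k.isLt; linarith⟩ : Fin n))
    (k : Fin i) (x : Fin n × Fin n × Fin n)
    (h1 : (x.1 : ℕ) = (k : ℕ) + 1) (h2 : (x.2.1 : ℕ) = (x.2.2 : ℕ))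
    (h3 : (x.2.1 : ℕ) ≤ (k : ℕ)) :
    α k x = 1 := by
  have hk := k.isLt
  rw [hα k, Finset.sum_apply]
  rw [Finset.sum_eq_single (⟨(x.2.1 : ℕ), by omega⟩ : Fin ((k : ℕ) + 1))]
  · simp only [eU, Prod.ext_iff, Fin.ext_iff]
    rw [if_pos (by (try simp only [true_and, and_true]); omega), if_neg (by (try simp only [true_and, and_true]); omega)]
    norm_num
  · intro j _ hj
    have hj2 := j.isLt
    have hjv : (j : ℕ) ≠ (x.2.1 : ℕ) := by
      intro he; exact hj (Fin.ext (by simpa using he))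
    simp only [eU, Prod.ext_iff, Fin.ext_iff]
    rw [if_neg (by (try simp only [true_and, and_true]); omega), if_neg (by (try simp only [true_and, and_true]); omega)]
    norm_num
  · intro h
    exact absurd (Finset.mem_univ _) h

lemma alpha_minus (hn : i + 1 ≤ n) (α : Fin i → MT n)
    (hα : ∀ k : Fin i, α k = ∑ j : Fin ((k : ℕ) + 1),
      eU (⟨(k : ℕ) + 1, by have := k.isLt; linarith⟩ : Fin n)
         (⟨(j : ℕ), by have := j.isLt; have := k.isLt; linarith⟩ : Fin n)
         (⟨(j : ℕ), by have := j.isLt; have := k.isLt; linarith⟩ : Fin n))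
    (k : Fin i) (x : Fin n × Fin n × Fin n)
    (h1 : (x.2.1 : ℕ) = (k : ℕ) + 1) (h2 : (x.1 : ℕ) = (x.2.2 : ℕ))
    (h3 : (x.1 : ℕ) ≤ (k : ℕ)) :
    α k x = -1 := by
  have hk := k.isLt
  rw [hα k, Finset.sum_apply]
  rw [Finset.sum_eq_single (⟨(x.1 : ℕ), by omega⟩ : Fin ((k : ℕ) + 1))]
  · simp only [eU, Prod.ext_iff, Fin.ext_iff]
    rw [if_neg (by (try simp only [true_and, and_true]); omega), if_pos (by (try simp only [true_and, and_true]); omega)]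
    norm_num
  · intro j _ hj
    have hj2 := j.isLt
    have hjv : (j : ℕ) ≠ (x.1 : ℕ) := by
      intro he; exact hj (Fin.ext (by simpa using he))
    simp only [eU, Prod.ext_iff, Fin.ext_iff]
    rw [if_neg (by (try simp only [true_and, and_true]); omega), if_neg (by (try simp only [true_and, and_true]); omega)]
    norm_num
  · intro h
    exact absurd (Finset.mem_univ _) h

lemma alpha_struct (hn : i + 1 ≤ n) (α : Fin i → MT n)
    (hα : ∀ k : Fin i, α k = ∑ j : Fin ((k : ℕ) + 1),
      eU (⟨(k : ℕ) + 1, by have := k.isLt; linarith⟩ : Fin n)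
         (⟨(j : ℕ), by have := j.isLt; have := k.isLt; linarith⟩ : Fin n)
         (⟨(j : ℕ), by have := j.isLt; have := k.isLt; linarith⟩ : Fin n))
    (k : Fin i) (x : Fin n × Fin n × Fin n) (hx : α k x ≠ 0) :
    ((x.1 : ℕ) = (k : ℕ) + 1 ∧ (x.2.1 : ℕ) = (x.2.2 : ℕ) ∧ (x.2.1 : ℕ) ≤ (k : ℕ)) ∨
    ((x.2.1 : ℕ) = (k : ℕ) + 1 ∧ (x.1 : ℕ) = (x.2.2 : ℕ) ∧ (x.1 : ℕ) ≤ (k : ℕ)) := by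
  by_contra hc
  apply hx
  rw [hα k, Finset.sum_apply]
  apply Finset.sum_eq_zero
  intro j _
  have hj := j.isLt
  simp only [eU, Prod.ext_iff, Fin.ext_iff]
  rw [if_neg (by (try simp only [true_and, and_true]); omega), if_neg (by (try simp only [true_and, and_true]); omega)]
  norm_num
end S6
namespace S6
open Equiv Finset

variable (n i : ℕ)

def uK (hi : 1 ≤ i) (K : Fin i → Fin n × Fin n × Fin n) : Fin (i+1) → Fin n :=
  Fin.snoc (fun j => (K j).1) ((K (⟨i - 1, by omega⟩ : Fin i)).2.1)

noncomputable def fF (hi : 1 ≤ i) (α : Fin i → MT n)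
    (p : Equiv.Perm (Fin i) × (Fin i → Fin n × Fin n × Fin n)) :
    ExteriorAlgebra ℚ (Fin n → ℚ) ⊗[ℚ] (Fin n → ℚ) :=
  (((Equiv.Perm.sign p.1 : ℤ) : ℚ) * (∏ j : Fin i, α (p.1 j) (p.2 j)) *
    (∏ j : Fin i, (if hj : (j : ℕ) = 0 then (1:ℚ)
       else if (p.2 j).2.2 = (p.2 (⟨(j : ℕ) - 1, by omega⟩ : Fin i)).2.1 then 1 else 0))) •
  (wedgeb n i (fun j => (p.2 j).1) ((p.2 (⟨i - 1, by omega⟩ : Fin i)).2.1) ⊗ₜ[ℚ]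
    bv ((p.2 (⟨0, hi⟩ : Fin i)).2.2))

noncomputable def gG (hn : i + 1 ≤ n) (_τ : Equiv.Perm (Fin (i+1))) :
    ExteriorAlgebra ℚ (Fin n → ℚ) ⊗[ℚ] (Fin n → ℚ) :=
  ((-1 : ℚ) ^ i) • ((ExteriorAlgebra.ιMulti ℚ (i+1)
      (fun p => bv (Fin.castLE (by omega : i + 1 ≤ n) p))) ⊗ₜ[ℚ]
    bv (⟨0, by omega⟩ : Fin n))

set_option maxHeartbeats 2000000 in
lemma core (hi : 1 ≤ i) (hn : i + 1 ≤ n) (α : Fin i → MT n)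
    (hα : ∀ k : Fin i, α k = ∑ j : Fin ((k : ℕ) + 1),
      eU (⟨(k : ℕ) + 1, by have := k.isLt; linarith⟩ : Fin n)
         (⟨(j : ℕ), by have := j.isLt; have := k.isLt; linarith⟩ : Fin n)
         (⟨(j : ℕ), by have := j.isLt; have := k.isLt; linarith⟩ : Fin n))
    (σ : Equiv.Perm (Fin i)) (K : Fin i → Fin n × Fin n × Fin n)
    (τ : Equiv.Perm (Fin (i+1)))
    (hu : ∀ p : Fin (i+1), uK n i hi K p = Fin.castLE (by omega : i+1 ≤ n) (τ p))
    (hb : ∀ j : Fin i, (K j).2.1 = Fin.castLE (by omega : i+1 ≤ n) (τ (minv τ j.succ)))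
    (hd : ∀ j : Fin i, (K j).2.2 = Fin.castLE (by omega : i+1 ≤ n) (τ (minv τ j.castSucc)))
    (hσ : ∀ j : Fin i, (σ j : ℕ) + 1 = max ((τ j.castSucc : ℕ)) ((τ (minv τ j.succ) : ℕ))) :
    fF n i hi α (σ, K) = gG n i hn τ := by
  have ha : ∀ j : Fin i, (K j).1 = Fin.castLE (by omega : i+1 ≤ n) (τ j.castSucc) := by
    intro j
    have := hu j.castSucc
    rwa [uK, Fin.snoc_castSucc] at this
  -- strict inequalities
  have hlt_minus : ∀ j : Fin i, minv τ j.castSucc = j.castSucc →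
      (τ j.castSucc : ℕ) < (τ (minv τ j.succ) : ℕ) := by
    intro j hc
    have hpos : j.castSucc ≤ minv τ j.succ :=
      le_trans (le_of_lt ((Fin.castSucc_lt_succ : j.castSucc < j.succ))) (le_minv τ j.succ)
    have hle := (minv_eq_self_iff τ j.castSucc).mp hc _ hpos
    have hne : τ j.castSucc ≠ τ (minv τ j.succ) := by
      intro he
      have := τ.injective he
      have h2 : j.castSucc < minv τ j.succ :=
        lt_of_lt_of_le ((Fin.castSucc_lt_succ : j.castSucc < j.succ)) (le_minv τ j.succ)
      rw [← this] at h2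
      exact lt_irrefl _ h2
    exact Fin.lt_iff_val_lt_val.mp (lt_of_le_of_ne hle hne)
  have hlt_plus : ∀ j : Fin i, minv τ j.castSucc ≠ j.castSucc →
      (τ (minv τ j.succ) : ℕ) < (τ j.castSucc : ℕ) := by
    intro j hc
    have hsh := minv_castSucc_of_ne τ j hc
    have hle : τ (minv τ j.castSucc) ≤ τ j.castSucc := apply_minv_le τ (le_refl _)
    rw [hsh] at hle
    have hne : τ (minv τ j.succ) ≠ τ j.castSucc := by
      intro he
      exact hc (hsh ▸ τ.injective he)
    exact Fin.lt_iff_val_lt_val.mp (lt_of_le_of_ne hle hne)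
  have halpha : ∀ j : Fin i, α (σ j) (K j) =
      (if minv τ j.castSucc = j.castSucc then (-1:ℚ) else 1) := by
    intro j
    by_cases hc : minv τ j.castSucc = j.castSucc
    · rw [if_pos hc]
      have hmax : (σ j : ℕ) + 1 = (τ (minv τ j.succ) : ℕ) := by
        rw [hσ j]; exact max_eq_right (le_of_lt (hlt_minus j hc))
      apply alpha_minus hn α hα
      · rw [hb j]; simpa using hmax.symm
      · rw [ha j, hd j, hc]
      · rw [ha j]
        have := hlt_minus j hc
        simpa using (by omega : (τ j.castSucc : ℕ) ≤ (σ j : ℕ))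
    · rw [if_neg hc]
      have hsh := minv_castSucc_of_ne τ j hc
      have hmax : (σ j : ℕ) + 1 = (τ j.castSucc : ℕ) := by
        rw [hσ j]; exact max_eq_left (le_of_lt (hlt_plus j hc))
      apply alpha_plus hn α hα
      · rw [ha j]; simpa using hmax.symm
      · rw [hb j, hd j, hsh]
      · rw [hb j]
        have := hlt_plus j hc
        simpa using (by omega : (τ (minv τ j.succ) : ℕ) ≤ (σ j : ℕ))
  have hprod : (∏ j : Fin i, α (σ j) (K j)) = (-1 : ℚ) ^ ((Sset τ).card) := by
    rw [Finset.prod_congr rfl (fun j _ => halpha j), Finset.prod_ite,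
      Finset.prod_const, Finset.prod_const, one_pow, mul_one]
    rfl
  have hchain : (∏ j : Fin i, (if hj : (j : ℕ) = 0 then (1:ℚ)
       else if (K j).2.2 = (K (⟨(j : ℕ) - 1, by omega⟩ : Fin i)).2.1 then 1 else 0)) = 1 := by
    apply Finset.prod_eq_one
    intro j _
    by_cases hj : (j : ℕ) = 0
    · rw [dif_pos hj]
    · rw [dif_neg hj, if_pos]
      rw [hd j, hb (⟨(j : ℕ) - 1, by omega⟩ : Fin i)]
      congr 2
      apply congrArg
      apply Fin.ext
      simp [Fin.val_succ]
      omega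
  have hd0 : (K (⟨0, hi⟩ : Fin i)).2.2 = (⟨0, by omega⟩ : Fin n) := by
    rw [hd (⟨0, hi⟩ : Fin i)]
    have h1 : (⟨0, hi⟩ : Fin i).castSucc = 0 := by
      apply Fin.ext; simp
    rw [h1, apply_minv_zero τ]
    apply Fin.ext; simp
  have hwedge : wedgeb n i (fun j => (K j).1) ((K (⟨i - 1, by omega⟩ : Fin i)).2.1) =
      Equiv.Perm.sign τ • ExteriorAlgebra.ιMulti ℚ (i+1)
        (fun p => bv (Fin.castLE (by omega : i + 1 ≤ n) p)) := by
    rw [wedge_eq]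
    have : (fun p => bv ((Fin.snoc (fun j => (K j).1)
        ((K (⟨i - 1, by omega⟩ : Fin i)).2.1) : Fin (i+1) → Fin n) p)) =
        (fun p => bv (Fin.castLE (by omega : i + 1 ≤ n) p)) ∘ ⇑τ := by
      funext p
      simp only [Function.comp_apply]
      exact congrArg bv (hu p)
    rw [this]
    exact AlternatingMap.map_perm _ _ τ
  -- assemble
  rw [fF, gG]
  simp only []
  rw [hprod, hchain, hd0, hwedge]
  have hsmul : (Equiv.Perm.sign τ • ExteriorAlgebra.ιMulti ℚ (i+1)
        (fun p => bv (Fin.castLE (by omega : i + 1 ≤ n) p))) =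
      ((Equiv.Perm.sign τ : ℤ) : ℚ) • ExteriorAlgebra.ιMulti ℚ (i+1)
        (fun p => bv (Fin.castLE (by omega : i + 1 ≤ n) p)) := by
    rw [Units.smul_def, Int.cast_smul_eq_zsmul]
  rw [hsmul, ← TensorProduct.smul_tmul', smul_smul]
  congr 1
  have hsign := signlemma ((Sset τ).card) τ σ rfl hσ
  have hs2 : (Equiv.Perm.sign τ : ℤ) * (Equiv.Perm.sign τ : ℤ) = 1 := by
    rcases Int.units_eq_one_or (Equiv.Perm.sign τ) with h | h <;> rw [h] <;> norm_num
  have hq : ((Equiv.Perm.sign σ : ℤ) : ℚ) * (-1)^((Sset τ).card) = (-1)^i *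
      ((Equiv.Perm.sign τ : ℤ) : ℚ) := by
    exact_mod_cast congrArg (fun z : ℤ => (z : ℚ)) hsign
  have hq2 : ((Equiv.Perm.sign τ : ℤ) : ℚ) * ((Equiv.Perm.sign τ : ℤ) : ℚ) = 1 := by
    exact_mod_cast congrArg (fun z : ℤ => (z : ℚ)) hs2
  calc ((Equiv.Perm.sign σ : ℤ) : ℚ) * (-1)^((Sset τ).card) * 1 *
        ((Equiv.Perm.sign τ : ℤ) : ℚ)
      = (((Equiv.Perm.sign σ : ℤ) : ℚ) * (-1)^((Sset τ).card)) *
        ((Equiv.Perm.sign τ : ℤ) : ℚ) := by ring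
    _ = ((-1)^i * ((Equiv.Perm.sign τ : ℤ) : ℚ)) * ((Equiv.Perm.sign τ : ℤ) : ℚ) := by rw [hq]
    _ = (-1)^i * (((Equiv.Perm.sign τ : ℤ) : ℚ) * ((Equiv.Perm.sign τ : ℤ) : ℚ)) := by ring
    _ = (-1 : ℚ)^i := by rw [hq2]; ring

end S6
namespace S6
open Equiv Finset

variable (n i : ℕ)

noncomputable def tK (hi : 1 ≤ i) (K : Fin i → Fin n × Fin n × Fin n) :
    Equiv.Perm (Fin (i+1)) :=
  if h : Function.Bijective (fun p : Fin (i+1) =>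
      (⟨min ((uK n i hi K p : ℕ)) i, by omega⟩ : Fin (i+1))) then
    Equiv.ofBijective _ h else 1

set_option maxHeartbeats 2000000 in
lemma analyze (hi : 1 ≤ i) (hn : i + 1 ≤ n) (α : Fin i → MT n)
    (hα : ∀ k : Fin i, α k = ∑ j : Fin ((k : ℕ) + 1),
      eU (⟨(k : ℕ) + 1, by have := k.isLt; linarith⟩ : Fin n)
         (⟨(j : ℕ), by have := j.isLt; have := k.isLt; linarith⟩ : Fin n)
         (⟨(j : ℕ), by have := j.isLt; have := k.isLt; linarith⟩ : Fin n))
    (σ : Equiv.Perm (Fin i)) (K : Fin i → Fin n × Fin n × Fin n)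
    (hne : fF n i hi α (σ, K) ≠ 0) :
    (∀ p : Fin (i+1), uK n i hi K p =
        Fin.castLE (by omega : i+1 ≤ n) (tK n i hi K p)) ∧
    (∀ j : Fin i, (K j).2.1 =
        Fin.castLE (by omega : i+1 ≤ n) (tK n i hi K (minv (tK n i hi K) j.succ))) ∧
    (∀ j : Fin i, (K j).2.2 =
        Fin.castLE (by omega : i+1 ≤ n) (tK n i hi K (minv (tK n i hi K) j.castSucc))) ∧
    (∀ j : Fin i, (σ j : ℕ) + 1 = max ((tK n i hi K j.castSucc : ℕ))
        ((tK n i hi K (minv (tK n i hi K) j.succ) : ℕ))) := by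
  rw [fF] at hne
  simp only [] at hne
  have hS : (((Equiv.Perm.sign σ : ℤ) : ℚ) * (∏ j : Fin i, α (σ j) (K j)) *
      (∏ j : Fin i, (if hj : (j : ℕ) = 0 then (1:ℚ)
        else if (K j).2.2 = (K (⟨(j : ℕ) - 1, by omega⟩ : Fin i)).2.1 then 1 else 0))) ≠ 0 :=
    fun h => hne (by rw [h, zero_smul])
  have hX : (wedgeb n i (fun j => (K j).1) ((K (⟨i - 1, by omega⟩ : Fin i)).2.1) ⊗ₜ[ℚ]
      bv ((K (⟨0, hi⟩ : Fin i)).2.2)) ≠ 0 := fun h => hne (by rw [h, smul_zero])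
  have hP : (∏ j : Fin i, α (σ j) (K j)) ≠ 0 :=
    fun h => hS (by rw [h, mul_zero, zero_mul])
  have hC : (∏ j : Fin i, (if hj : (j : ℕ) = 0 then (1:ℚ)
      else if (K j).2.2 = (K (⟨(j : ℕ) - 1, by omega⟩ : Fin i)).2.1 then 1 else 0)) ≠ 0 :=
    fun h => hS (by rw [h, mul_zero])
  have hαne : ∀ j : Fin i, α (σ j) (K j) ≠ 0 :=
    fun j => Finset.prod_ne_zero_iff.mp hP j (Finset.mem_univ j)
  have hch : ∀ j : Fin i, (j : ℕ) ≠ 0 →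
      (K j).2.2 = (K (⟨(j : ℕ) - 1, by omega⟩ : Fin i)).2.1 := by
    intro j hj
    have h1 := Finset.prod_ne_zero_iff.mp hC j (Finset.mem_univ j)
    rw [dif_neg hj] at h1
    by_contra hcon
    rw [if_neg hcon] at h1
    exact h1 rfl
  have struct : ∀ j : Fin i,
      (((K j).1 : ℕ) = (σ j : ℕ) + 1 ∧ ((K j).2.1 : ℕ) = ((K j).2.2 : ℕ) ∧
        ((K j).2.1 : ℕ) ≤ (σ j : ℕ)) ∨
      (((K j).2.1 : ℕ) = (σ j : ℕ) + 1 ∧ ((K j).1 : ℕ) = ((K j).2.2 : ℕ) ∧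
        ((K j).1 : ℕ) ≤ (σ j : ℕ)) :=
    fun j => alpha_struct hn α hα (σ j) (K j) (hαne j)
  have hu1 : ∀ j : Fin i, uK n i hi K j.castSucc = (K j).1 := by
    intro j; rw [uK, Fin.snoc_castSucc]
  have hulast : uK n i hi K (Fin.last i) = (K (⟨i - 1, by omega⟩ : Fin i)).2.1 := by
    rw [uK, Fin.snoc_last]
  have hbnd : ∀ p : Fin (i+1), (uK n i hi K p : ℕ) ≤ i := by
    intro p
    induction p using Fin.lastCases with
    | last =>
      rw [hulast]
      rcases struct (⟨i - 1, by omega⟩ : Fin i) with ⟨-, -, h3⟩ | ⟨h1, -, -⟩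
      · have := (σ (⟨i - 1, by omega⟩ : Fin i)).isLt; omega
      · have := (σ (⟨i - 1, by omega⟩ : Fin i)).isLt; omega
    | cast j =>
      rw [hu1 j]
      rcases struct j with ⟨h1, -, -⟩ | ⟨-, h2, h3⟩
      · have := (σ j).isLt; omega
      · have := (σ j).isLt; omega
  have hM : ExteriorAlgebra.ιMulti ℚ (i+1) (fun p => bv (uK n i hi K p)) ≠ 0 := by
    intro h
    apply hX
    have hw : wedgeb n i (fun j => (K j).1) ((K (⟨i - 1, by omega⟩ : Fin i)).2.1) =
        ExteriorAlgebra.ιMulti ℚ (i+1) (fun p => bv (uK n i hi K p)) := wedge_eq _ _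
    rw [hw, h, TensorProduct.zero_tmul]
  have hinj : Function.Injective (uK n i hi K) := by
    intro p q hpq
    by_contra hne2
    exact hM (AlternatingMap.map_eq_zero_of_eq _ _ (congrArg bv hpq) hne2)
  have hvinj : Function.Injective (fun p : Fin (i+1) =>
      (⟨min ((uK n i hi K p : ℕ)) i, by omega⟩ : Fin (i+1))) := by
    intro p q h
    apply hinj
    apply Fin.ext
    have := Fin.ext_iff.mp h
    simp only [min_eq_left (hbnd p), min_eq_left (hbnd q)] at this
    exact this
  have hbij : Function.Bijective (fun p : Fin (i+1) =>
      (⟨min ((uK n i hi K p : ℕ)) i, by omega⟩ : Fin (i+1))) :=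
    Finite.injective_iff_bijective.mp hvinj
  set τ : Equiv.Perm (Fin (i+1)) := tK n i hi K with hτdef
  have hτv : ∀ p : Fin (i+1), (τ p : ℕ) = (uK n i hi K p : ℕ) := by
    intro p
    rw [hτdef, tK, dif_pos hbij]
    simp only [Equiv.ofBijective_apply]
    exact min_eq_left (hbnd p)
  have hA1 : ∀ p : Fin (i+1), uK n i hi K p =
      Fin.castLE (by omega : i+1 ≤ n) (τ p) := by
    intro p
    apply Fin.ext
    simp [hτv p]
  -- decode of the chain value at j.succ
  have hdec : ∀ j : Fin i, (if h : ((j.succ : Fin (i+1)) : ℕ) < i then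
      ((K (⟨((j.succ : Fin (i+1)) : ℕ), h⟩ : Fin i)).2.2 : ℕ)
      else ((K (⟨i - 1, by omega⟩ : Fin i)).2.1 : ℕ)) = ((K j).2.1 : ℕ) := by
    intro j
    by_cases hlt : ((j.succ : Fin (i+1)) : ℕ) < i
    · rw [dif_pos hlt]
      have hj1 : (((⟨((j.succ : Fin (i+1)) : ℕ), hlt⟩ : Fin i)) : ℕ) ≠ 0 := by
        simp [Fin.val_succ]
      rw [hch _ hj1]
      have hjj2 : (⟨(((⟨((j.succ : Fin (i+1)) : ℕ), hlt⟩ : Fin i)) : ℕ) - 1,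
          by omega⟩ : Fin i) = j := Fin.ext (by simp [Fin.val_succ])
      rw [hjj2]
    · rw [dif_neg hlt]
      have hjj : j = (⟨i - 1, by omega⟩ : Fin i) := by
        apply Fin.ext
        have := j.isLt
        simp only [Fin.val_succ] at hlt
        simp only []
        omega
      rw [← hjj]
  have hLm : ∀ p : Fin (i+1), ((τ (minv τ p) : ℕ)) =
      (if h : (p : ℕ) < i then ((K (⟨(p : ℕ), h⟩ : Fin i)).2.2 : ℕ)
       else ((K (⟨i - 1, by omega⟩ : Fin i)).2.1 : ℕ)) := by
    intro p
    induction p using Fin.reverseInduction with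
    | last =>
      rw [minv_last τ, dif_neg (by simp), hτv, hulast]
    | cast j ih =>
      have haj : (τ j.castSucc : ℕ) = ((K j).1 : ℕ) := by rw [hτv, hu1 j]
      have hbj : (τ (minv τ j.succ) : ℕ) = ((K j).2.1 : ℕ) := by
        rw [ih, hdec j]
      rw [dif_pos (by simpa using j.isLt)]
      have hjj : (⟨((j.castSucc : Fin (i+1)) : ℕ), by simpa using j.isLt⟩ : Fin i) = j :=
        Fin.ext (by simp)
      rw [hjj]
      rcases struct j with ⟨h1, h2, h3⟩ | ⟨h1, h2, h3⟩
      · have hne2 : minv τ j.castSucc ≠ j.castSucc := by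
          intro hmm
          have hle := (minv_eq_self_iff τ j.castSucc).mp hmm (minv τ j.succ)
            (le_trans (le_of_lt ((Fin.castSucc_lt_succ : j.castSucc < j.succ))) (le_minv τ j.succ))
          have hv := Fin.le_def.mp hle
          omega
        rw [minv_castSucc_of_ne τ j hne2, hbj]
        omega
      · have heq2 : minv τ j.castSucc = j.castSucc := by
          by_contra hne2
          have hsh := minv_castSucc_of_ne τ j hne2
          have hle := apply_minv_le τ (le_refl j.castSucc)
          have hv := Fin.le_def.mp hle
          rw [hsh] at hv
          rw [hbj] at hv
          omega
        rw [heq2, haj]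
        omega
  have hA2 : ∀ j : Fin i, (K j).2.1 =
      Fin.castLE (by omega : i+1 ≤ n) (τ (minv τ j.succ)) := by
    intro j
    apply Fin.ext
    rw [Fin.coe_castLE]
    rw [hLm j.succ, hdec j]
  have hA3 : ∀ j : Fin i, (K j).2.2 =
      Fin.castLE (by omega : i+1 ≤ n) (τ (minv τ j.castSucc)) := by
    intro j
    apply Fin.ext
    rw [Fin.coe_castLE]
    rw [hLm j.castSucc, dif_pos (by simpa using j.isLt)]
    have hjj : (⟨((j.castSucc : Fin (i+1)) : ℕ), by simpa using j.isLt⟩ : Fin i) = j :=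
      Fin.ext (by simp)
    rw [hjj]
  have hA4 : ∀ j : Fin i, (σ j : ℕ) + 1 = max ((τ j.castSucc : ℕ))
      ((τ (minv τ j.succ) : ℕ)) := by
    intro j
    have haj : (τ j.castSucc : ℕ) = ((K j).1 : ℕ) := by rw [hτv, hu1 j]
    have hbj : (τ (minv τ j.succ) : ℕ) = ((K j).2.1 : ℕ) := by
      rw [hLm j.succ, hdec j]
    rcases struct j with ⟨h1, h2, h3⟩ | ⟨h1, h2, h3⟩ <;> omega
  exact ⟨hA1, hA2, hA3, hA4⟩
end S6
namespace S6
open Equiv Finset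

variable (n i : ℕ)

set_option maxHeartbeats 2000000 in
lemma surj (hi : 1 ≤ i) (hn : i + 1 ≤ n) (α : Fin i → MT n)
    (hα : ∀ k : Fin i, α k = ∑ j : Fin ((k : ℕ) + 1),
      eU (⟨(k : ℕ) + 1, by have := k.isLt; linarith⟩ : Fin n)
         (⟨(j : ℕ), by have := j.isLt; have := k.isLt; linarith⟩ : Fin n)
         (⟨(j : ℕ), by have := j.isLt; have := k.isLt; linarith⟩ : Fin n))
    (τ : Equiv.Perm (Fin (i+1))) :
    ∃ (σ : Equiv.Perm (Fin i)) (K : Fin i → Fin n × Fin n × Fin n),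
      fF n i hi α (σ, K) = gG n i hn τ ∧ tK n i hi K = τ := by
  have hvals : ∀ p : Fin (i+1), (τ p : ℕ) ≤ i := fun p => by have := (τ p).isLt; omega
  have hposlt : ∀ j : Fin i, j.castSucc < minv τ j.succ :=
    fun j => lt_of_lt_of_le ((Fin.castSucc_lt_succ : j.castSucc < j.succ)) (le_minv τ j.succ)
  have hneq : ∀ j : Fin i, (τ j.castSucc : ℕ) ≠ (τ (minv τ j.succ) : ℕ) := by
    intro j he
    have hthis : j.castSucc = minv τ j.succ := τ.injective (Fin.ext he)
    have hp := hposlt j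
    rw [← hthis] at hp
    exact lt_irrefl _ hp
  have hdich : ∀ j : Fin i,
      (minv τ j.castSucc = j.castSucc ∧ (τ j.castSucc : ℕ) < (τ (minv τ j.succ) : ℕ)) ∨
      (minv τ j.castSucc ≠ j.castSucc ∧ minv τ j.castSucc = minv τ j.succ ∧
        (τ (minv τ j.succ) : ℕ) < (τ j.castSucc : ℕ)) := by
    intro j
    by_cases hc : minv τ j.castSucc = j.castSucc
    · left
      refine ⟨hc, ?_⟩
      have hle := (minv_eq_self_iff τ j.castSucc).mp hc (minv τ j.succ)
        (le_of_lt (hposlt j))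
      have := Fin.le_def.mp hle
      have := hneq j
      omega
    · right
      have hsh := minv_castSucc_of_ne τ j hc
      refine ⟨hc, hsh, ?_⟩
      have hle := apply_minv_le τ (le_refl j.castSucc)
      rw [hsh] at hle
      have := Fin.le_def.mp hle
      have := hneq j
      omega
  have hmaxlt : ∀ j : Fin i, max ((τ j.castSucc : ℕ)) ((τ (minv τ j.succ) : ℕ)) - 1 < i := by
    intro j
    have := hvals j.castSucc
    have := hvals (minv τ j.succ)
    omega
  set sfun : Fin i → Fin i := fun j =>
    ⟨max ((τ j.castSucc : ℕ)) ((τ (minv τ j.succ) : ℕ)) - 1, hmaxlt j⟩ with hsfun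
  have hsval : ∀ j : Fin i, (sfun j : ℕ) + 1 =
      max ((τ j.castSucc : ℕ)) ((τ (minv τ j.succ) : ℕ)) := by
    intro j
    have := hneq j
    simp only [hsfun]
    omega
  have hsinj : Function.Injective sfun := by
    intro j j' hjj
    have hv : max ((τ j.castSucc : ℕ)) ((τ (minv τ j.succ) : ℕ)) =
        max ((τ j'.castSucc : ℕ)) ((τ (minv τ j'.succ) : ℕ)) := by
      have h1 := hsval j
      have h2 := hsval j'
      rw [hjj] at h1
      omega
    -- both-minus auxiliary
    have haux : ∀ a b : Fin i, a < b → minv τ a.castSucc = a.castSucc →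
        minv τ b.castSucc = b.castSucc → minv τ a.succ = minv τ b.succ → False := by
      intro a b hab ha hb he
      have h1 : τ (minv τ a.succ) ≤ τ b.castSucc :=
        apply_minv_le τ (Fin.succ_le_castSucc_iff.mpr hab)
      have h2 : τ b.castSucc ≤ τ (minv τ b.succ) :=
        (minv_eq_self_iff τ b.castSucc).mp hb (minv τ b.succ) (le_of_lt (hposlt b))
      rw [he] at h1
      have h3 : τ (minv τ b.succ) = τ b.castSucc := le_antisymm (le_antisymm h1 h2 ▸ le_refl _) h2
      have h4 : minv τ b.succ = b.castSucc := τ.injective h3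
      have := hposlt b
      rw [h4] at this
      exact lt_irrefl _ this
    rcases hdich j with ⟨hm1, hv1⟩ | ⟨hm1, hsh1, hv1⟩ <;>
      rcases hdich j' with ⟨hm2, hv2⟩ | ⟨hm2, hsh2, hv2⟩
    · -- both minus: max at minv succ
      have hval : (τ (minv τ j.succ) : ℕ) = (τ (minv τ j'.succ) : ℕ) := by omega
      have hpos : minv τ j.succ = minv τ j'.succ := τ.injective (Fin.ext hval)
      rcases lt_trichotomy j j' with h | h | h
      · exact absurd (haux j j' h hm1 hm2 hpos) (fun x => x)
      · exact h
      · exact absurd (haux j' j h hm2 hm1 hpos.symm) (fun x => x)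
    · -- j minus, j' plus
      have hval : (τ (minv τ j.succ) : ℕ) = (τ j'.castSucc : ℕ) := by omega
      have hpos : minv τ j.succ = j'.castSucc := τ.injective (Fin.ext hval)
      exfalso
      apply hm2
      rw [← hpos, minv_idem, hpos]
    · -- j plus, j' minus
      have hval : (τ j.castSucc : ℕ) = (τ (minv τ j'.succ) : ℕ) := by omega
      have hpos : j.castSucc = minv τ j'.succ := τ.injective (Fin.ext hval)
      exfalso
      apply hm1
      rw [hpos, minv_idem, ← hpos]
    · -- both plus
      have hval : (τ j.castSucc : ℕ) = (τ j'.castSucc : ℕ) := by omega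
      have hpos : j.castSucc = j'.castSucc := τ.injective (Fin.ext hval)
      exact Fin.castSucc_injective _ hpos
  set σs : Equiv.Perm (Fin i) :=
    Equiv.ofBijective sfun (Finite.injective_iff_bijective.mp hsinj) with hσs
  set KT : Fin i → Fin n × Fin n × Fin n := fun j =>
    (Fin.castLE (by omega : i+1 ≤ n) (τ j.castSucc),
     Fin.castLE (by omega : i+1 ≤ n) (τ (minv τ j.succ)),
     Fin.castLE (by omega : i+1 ≤ n) (τ (minv τ j.castSucc))) with hKT
  have hu : ∀ p : Fin (i+1), uK n i hi KT p = Fin.castLE (by omega : i+1 ≤ n) (τ p) := by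
    intro p
    induction p using Fin.lastCases with
    | last =>
      rw [uK, Fin.snoc_last]
      have h1 : ((⟨i - 1, by omega⟩ : Fin i)).succ = Fin.last i := by
        apply Fin.ext; simp; omega
      simp only [hKT]
      rw [h1, minv_last]
    | cast j =>
      rw [uK, Fin.snoc_castSucc]
  have hσ : ∀ j : Fin i, (σs j : ℕ) + 1 = max ((τ j.castSucc : ℕ))
      ((τ (minv τ j.succ) : ℕ)) := by
    intro j
    rw [hσs]
    rw [show (Equiv.ofBijective sfun (Finite.injective_iff_bijective.mp hsinj)) j
      = sfun j from rfl]
    exact hsval j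
  have hcore := core n i hi hn α hα σs KT τ hu (fun j => rfl) (fun j => rfl) hσ
  refine ⟨σs, KT, hcore, ?_⟩
  have hvv : (fun p : Fin (i+1) =>
      (⟨min ((uK n i hi KT p : ℕ)) i, by omega⟩ : Fin (i+1))) = ⇑τ := by
    funext p
    apply Fin.ext
    simp only []
    rw [hu p]
    simp [hvals p]
  have hbij : Function.Bijective (fun p : Fin (i+1) =>
      (⟨min ((uK n i hi KT p : ℕ)) i, by omega⟩ : Fin (i+1))) := by
    rw [hvv]; exact τ.bijective
  rw [tK, dif_pos hbij]
  apply Equiv.ext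
  intro p
  rw [Equiv.ofBijective_apply]
  exact congrFun hvv p

lemma base_eq (hn : i + 1 ≤ n) (v : Fin i → Fin n) (w : Fin n)
    (hv : ∀ j : Fin i, (v j : ℕ) = (j : ℕ)) (hw : (w : ℕ) = i) :
    wedgeb n i v w = ExteriorAlgebra.ιMulti ℚ (i+1)
      (fun p => bv (Fin.castLE (by omega : i + 1 ≤ n) p)) := by
  rw [wedge_eq]
  have hfun : (fun p : Fin (i+1) => bv ((Fin.snoc v w : Fin (i+1) → Fin n) p)) =
      (fun p => bv (Fin.castLE (by omega : i + 1 ≤ n) p)) := by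
    funext p
    apply congrArg bv
    induction p using Fin.lastCases with
    | last =>
      rw [Fin.snoc_last]
      apply Fin.ext
      simp [hw]
    | cast j =>
      rw [Fin.snoc_castSucc]
      apply Fin.ext
      simp [hv j]
  rw [hfun]
end S6

theorem stmt_6 (n i : ℕ) (hi : 1 ≤ i) (hn : i + 1 ≤ n)
    (α : Fin i → MT n)
    (hα : ∀ k : Fin i, α k = ∑ j : Fin ((k : ℕ) + 1),
      eU (⟨(k : ℕ) + 1, by have := k.isLt; omega⟩ : Fin n)
         (⟨(j : ℕ), by have := j.isLt; have := k.isLt; omega⟩ : Fin n)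
         (⟨(j : ℕ), by have := j.isLt; have := k.isLt; omega⟩ : Fin n)) :
    ctree n i hi (iot n i α) =
      ((-1 : ℚ) ^ i * (Nat.factorial (i + 1) : ℚ)) •
        (wedgeb n i (fun j : Fin i => (⟨(j : ℕ), by have := j.isLt; omega⟩ : Fin n))
            (⟨i, by omega⟩ : Fin n) ⊗ₜ[ℚ]
          bv (⟨0, by omega⟩ : Fin n)) := by
  have hstep1 : ctree n i hi (iot n i α) =
      ∑ p : Equiv.Perm (Fin i) × (Fin i → Fin n × Fin n × Fin n), S6.fF n i hi α p := by
    rw [ctree, Fintype.sum_prod_type, Finset.sum_comm]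
    apply Finset.sum_congr rfl
    intro K _
    rw [iot, Finset.sum_mul, Finset.sum_smul]
    rfl
  have hstep2 : (∑ p : Equiv.Perm (Fin i) × (Fin i → Fin n × Fin n × Fin n),
      S6.fF n i hi α p) = ∑ τ : Equiv.Perm (Fin (i+1)), S6.gG n i hn τ := by
    refine Finset.sum_bij_ne_zero (fun p _ _ => S6.tK n i hi p.2)
      (fun _ _ _ => Finset.mem_univ _) ?_ ?_ ?_
    · intro a₁ h₁₁ h₁₂ a₂ h₂₁ h₂₂ he
      have he' : S6.tK n i hi a₁.2 = S6.tK n i hi a₂.2 := he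
      obtain ⟨u1, b1, d1, m1⟩ := S6.analyze n i hi hn α hα a₁.1 a₁.2 h₁₂
      obtain ⟨u2, b2, d2, m2⟩ := S6.analyze n i hi hn α hα a₂.1 a₂.2 h₂₂
      have hK : a₁.2 = a₂.2 := by
        funext j
        have e1 : (a₁.2 j).1 = (a₂.2 j).1 := by
          have q1 := u1 j.castSucc
          have q2 := u2 j.castSucc
          rw [S6.uK, Fin.snoc_castSucc] at q1 q2
          rw [q1, q2, he']
        have e2 : (a₁.2 j).2.1 = (a₂.2 j).2.1 := by rw [b1 j, b2 j, he']
        have e3 : (a₁.2 j).2.2 = (a₂.2 j).2.2 := by rw [d1 j, d2 j, he']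
        exact Prod.ext e1 (Prod.ext e2 e3)
      have hσeq : a₁.1 = a₂.1 := by
        apply Equiv.ext
        intro j
        apply Fin.ext
        have q1 := m1 j
        have q2 := m2 j
        rw [he'] at q1
        omega
      exact Prod.ext hσeq hK
    · intro τ _ hgne
      obtain ⟨σs, KT, hf, ht⟩ := S6.surj n i hi hn α hα τ
      exact ⟨(σs, KT), Finset.mem_univ _, by rw [hf]; exact hgne, ht⟩
    · intro a h₁ h₂
      obtain ⟨u1, b1, d1, m1⟩ := S6.analyze n i hi hn α hα a.1 a.2 h₂
      exact S6.core n i hi hn α hα a.1 a.2 (S6.tK n i hi a.2) u1 b1 d1 m1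
  rw [hstep1, hstep2]
  simp only [S6.gG]
  rw [Finset.sum_const, Finset.card_univ, Fintype.card_perm, Fintype.card_fin]
  rw [← Nat.cast_smul_eq_nsmul ℚ, smul_smul,
    S6.base_eq n i hn _ _ (fun j => rfl) rfl,
    mul_comm ((Nat.factorial (i+1) : ℚ)) ((-1 : ℚ)^i)]
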